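/- Every graph G satisfies t(G) ≤ si(G), where t(G) is the track number: the least d such that G is a d-track interval graph. -/

import Mathlib

/-- `(a, b, L)` is a `d`-simultaneous interval representation of `G`:
each vertex `v` gets a nonempty open interval `(a v, b v)` and a label set
`L v ⊆ {1,…,d}`, and distinct vertices are adjacent iff both their intervals
and their label sets intersect. -/
def IsSIRep {V : Type*} (G : SimpleGraph V) (d : ℕ)
    (a b : V → ℝ) (L : V → Finset (Fin d)) : Prop :=
  (∀ v, a v < b v) ∧
  ∀ u v : V, u ≠ v →
    (G.Adj u v ↔ (Set.Ioo (a u) (b u) ∩ Set.Ioo (a v) (b v)).Nonempty ∧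
      (L u ∩ L v).Nonempty)

/-- The simultaneous interval number of `G`. -/
noncomputable def si {V : Type*} (G : SimpleGraph V) : ℕ :=
  sInf {d | ∃ a b L, IsSIRep G d a b L}

/-- The track number of `G`: the least `d` such that `G` is a `d`-track
interval graph. -/
noncomputable def trackNumber {V : Type*} (G : SimpleGraph V) : ℕ :=
  sInf {d | ∃ a b : Fin d → V → ℝ, (∀ j v, a j v < b j v) ∧
    ∀ u v : V, u ≠ v →
      (G.Adj u v ↔ ∃ j, (Set.Ioo (a j u) (b j u) ∩
        Set.Ioo (a j v) (b j v)).Nonempty)}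

/-!
A finite graph has an si-representation (all intervals equal, each vertex labelled by the edges
at it), so `si G` is attained by some representation `(a, b, L)` with labels in `Fin (si G)`.
Turn it into a track representation with the same number of tracks: on track `j`, a vertex
carrying label `j` keeps its interval `(a v, b v)`, and every other vertex is parked in its own
unit interval to the right of all the `b v`. A parked interval meets no other interval on its
track, so two vertices meet on track `j` iff both carry `j` and their intervals meet.
-/

open Set

section

variable {V : Type*}

def IsTrackRep (G : SimpleGraph V) (d : ℕ) (a b : Fin d → V → ℝ) : Prop :=
  (∀ j v, a j v < b j v) ∧
    ∀ u v : V, u ≠ v →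
      (G.Adj u v ↔ ∃ j, (Ioo (a j u) (b j u) ∩ Ioo (a j v) (b j v)).Nonempty)

lemma trackNumber_le_of_isTrackRep {G : SimpleGraph V} {d : ℕ} {a b : Fin d → V → ℝ}
    (h : IsTrackRep G d a b) : trackNumber G ≤ d :=
  Nat.sInf_le ⟨a, b, h⟩

lemma exists_labelling_inter_nonempty_iff_adj [Finite V] (G : SimpleGraph V) :
    ∃ (d : ℕ) (L : V → Finset (Fin d)),
      ∀ u v, u ≠ v → (G.Adj u v ↔ (L u ∩ L v).Nonempty) := by
  classical
  have := Fintype.ofFinite V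
  let e := Fintype.equivFin (Sym2 V)
  refine ⟨_, fun v => {i | e.symm i ∈ G.edgeSet ∧ v ∈ e.symm i}, fun u v huv => ?_⟩
  simp only [Finset.Nonempty, Finset.mem_inter, Finset.mem_filter, Finset.mem_univ, true_and]
  constructor
  · intro h
    exact ⟨e s(u, v), by simpa using h⟩
  · rintro ⟨i, ⟨hi, hu⟩, -, hv⟩
    rwa [(Sym2.mem_and_mem_iff huv).1 ⟨hu, hv⟩] at hi

lemma exists_isSIRep [Finite V] (G : SimpleGraph V) : ∃ d a b L, IsSIRep G d a b L := by
  obtain ⟨d, L, hL⟩ := exists_labelling_inter_nonempty_iff_adj G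
  refine ⟨d, fun _ => 0, fun _ => 1, L, fun _ => zero_lt_one, fun u v huv => ?_⟩
  simp [hL u v huv]

lemma exists_isSIRep_si [Finite V] (G : SimpleGraph V) : ∃ a b L, IsSIRep G (si G) a b L :=
  Nat.sInf_mem (exists_isSIRep G)

lemma exists_pairwise_disjoint_unit_Ioo_ge [Countable V] (M : ℝ) :
    ∃ p : V → ℝ, (∀ v, M ≤ p v) ∧
      Pairwise fun u v => Disjoint (Ioo (p u) (p u + 1)) (Ioo (p v) (p v + 1)) := by
  obtain ⟨f, hf⟩ := Countable.exists_injective_nat V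
  refine ⟨fun v => M + f v, fun v => by simp, fun u v huv => ?_⟩
  dsimp only
  rw [Ioo_disjoint_Ioo]
  rcases (hf.ne huv).lt_or_gt with h | h
  · have : (f u : ℝ) + 1 ≤ f v := by exact_mod_cast h
    exact min_le_of_left_le (le_max_of_le_right (by linarith))
  · have : (f v : ℝ) + 1 ≤ f u := by exact_mod_cast h
    exact min_le_of_right_le (le_max_of_le_left (by linarith))

lemma ite_inter_ite_nonempty_iff {α : Type*} {I P : V → Set α} {q : V → Prop} [DecidablePred q]
    {u v : V} (hIP : ∀ x y, Disjoint (I x) (P y)) (hP : Disjoint (P u) (P v)) :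
    ((if q u then I u else P u) ∩ (if q v then I v else P v)).Nonempty ↔
      q u ∧ q v ∧ (I u ∩ I v).Nonempty := by
  split_ifs with hu hv hv
  · simp [hu, hv]
  · simpa [hu, hv, ← not_disjoint_iff_nonempty_inter] using hIP u v
  · simpa [hu, ← not_disjoint_iff_nonempty_inter] using (hIP v u).symm
  · simpa [hu, ← not_disjoint_iff_nonempty_inter] using hP

lemma exists_isTrackRep_of_isSIRep [Finite V] {G : SimpleGraph V} {d : ℕ} {a b : V → ℝ}
    {L : V → Finset (Fin d)} (h : IsSIRep G d a b L) : ∃ a' b', IsTrackRep G d a' b' := by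
  classical
  obtain ⟨hab, hadj⟩ := h
  obtain ⟨M, hM⟩ := (finite_range b).bddAbove
  obtain ⟨p, hpM, hp⟩ := exists_pairwise_disjoint_unit_Ioo_ge (V := V) M
  have hbp : ∀ x y, Disjoint (Ioo (a x) (b x)) (Ioo (p y) (p y + 1)) := fun x y =>
    Ioo_disjoint_Ioo.2 <| min_le_of_left_le <|
      (hM (mem_range_self x)).trans ((hpM y).trans (le_max_right _ _))
  refine ⟨fun j v => if j ∈ L v then a v else p v, fun j v => if j ∈ L v then b v else p v + 1,
    fun j v => ?_, fun u v huv => ?_⟩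
  · dsimp only
    split_ifs
    exacts [hab v, lt_add_one _]
  · have key j := ite_inter_ite_nonempty_iff (q := (j ∈ L ·)) hbp (hp huv)
    simp only [apply_ite₂ Ioo, key, hadj u v huv, Finset.Nonempty, Finset.mem_inter]
    tauto

end

/-- Every graph satisfies `t(G) ≤ si(G)`. -/
theorem trackNumber_le_si {V : Type*} [Fintype V] (G : SimpleGraph V) :
    trackNumber G ≤ si G := by
  obtain ⟨a, b, L, h⟩ := exists_isSIRep_si G
  obtain ⟨a', b', h'⟩ := exists_isTrackRep_of_isSIRep h
  exact trackNumber_le_of_isTrackRep h'
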